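/- arXiv:2306.11655 — 9 statements merged into one kernel-verified Lean document; each statement's English description precedes it below -/
import Mathlib

section
/- There is no cycle in the move dynamics: there is no sequence of states a^1, a^2, ..., a^n with n > 1 such that each a^{t+1} is obtained from a^t by a move and a^n = a^1. -/
/-- A move at triggering position `T`: requires `a T = 0`; the new state `a'` has
`a' T = 2`, the entry at the largest index `j < T` with positive value decreased
by one (if it exists), the entry at the smallest index `j > T` with positive
value decreased by one (if it exists), and all other entries unchanged. -/
def Move {n : ℕ} (a a' : Fin n → ℕ) (T : Fin n) : Prop :=
  a T = 0 ∧ a' T = 2 ∧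
  ((∃ j : Fin n, j < T ∧ 0 < a j ∧ a' j = a j - 1 ∧
      (∀ k : Fin n, j < k → k < T → a k = 0) ∧
      (∀ k : Fin n, k < T → k ≠ j → a' k = a k)) ∨
    ((∀ j : Fin n, j < T → a j = 0) ∧ (∀ j : Fin n, j < T → a' j = a j))) ∧
  ((∃ j : Fin n, T < j ∧ 0 < a j ∧ a' j = a j - 1 ∧
      (∀ k : Fin n, T < k → k < j → a k = 0) ∧
      (∀ k : Fin n, T < k → k ≠ j → a' k = a k)) ∨
    ((∀ j : Fin n, T < j → a j = 0) ∧ (∀ j : Fin n, T < j → a' j = a j)))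

/-- One step of the dynamics: some move is possible. -/
def Step {n : ℕ} (a a' : Fin n → ℕ) : Prop := ∃ T, Move a a' T

/-- Reachability by a finite (possibly empty) sequence of moves. -/
def Reach {n : ℕ} : (Fin n → ℕ) → (Fin n → ℕ) → Prop := Relation.ReflTransGen Step

/-- Total number of tokens. -/
def Tot {n : ℕ} (a : Fin n → ℕ) : ℕ := ∑ i, a i

/-- Colexicographic strict order: `a` is smaller than `b` reading from the right. -/
def ColexF {n : ℕ} (a b : Fin n → ℕ) : Prop :=
  ∃ j, a j < b j ∧ ∀ k, j < k → a k = b k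

lemma colex_trans {n : ℕ} {a b c : Fin n → ℕ} (h1 : ColexF a b) (h2 : ColexF b c) :
    ColexF a c := by
  obtain ⟨j1, hj1, he1⟩ := h1
  obtain ⟨j2, hj2, he2⟩ := h2
  rcases lt_trichotomy j1 j2 with h | h | h
  · exact ⟨j2, (he1 j2 h) ▸ hj2, fun k hk => (he1 k (h.trans hk)).trans (he2 k hk)⟩
  · subst h
    exact ⟨j1, hj1.trans hj2, fun k hk => (he1 k hk).trans (he2 k hk)⟩
  · exact ⟨j1, hj1.trans_eq (he2 j1 h), fun k hk => (he1 k hk).trans (he2 k (h.trans hk))⟩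

lemma move_cases {n : ℕ} {a a' : Fin n → ℕ} {T : Fin n} (h : Move a a' T) :
    (Tot a' = Tot a ∧ ColexF a' a) ∨ Tot a < Tot a' := by
  obtain ⟨hT0, hT2, hL, hR⟩ := h
  rcases hL with ⟨jL, hjL, hjLpos, hjL', _, hLk⟩ | ⟨_, hLk⟩ <;>
  rcases hR with ⟨jR, hjR, hjRpos, hjR', _, hRk⟩ | ⟨_, hRk⟩
  · -- both neighbors exist: sum preserved, colex decreases
    left
    constructor
    · have key : ∀ k, a' k + ((if k = jL then 1 else 0) + (if k = jR then 1 else 0))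
          = a k + (if k = T then 2 else 0) := by
        intro k
        rcases lt_trichotomy k T with hk | hk | hk
        · have hkT : k ≠ T := ne_of_lt hk
          have hkR : k ≠ jR := fun e => absurd (e ▸ hk) (not_lt.2 hjR.le)
          by_cases hkL : k = jL
          · subst hkL; simp [hkT, hkR, hjL']; omega
          · simp [hkT, hkR, hkL, hLk k hk hkL]
        · subst hk
          have h1 : k ≠ jL := fun e => absurd (e ▸ hjL) (lt_irrefl _)
          have h2 : k ≠ jR := fun e => absurd (e ▸ hjR) (lt_irrefl _)
          simp [h1, h2, hT2, hT0]
        · have hkT : k ≠ T := ne_of_gt hk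
          have hkL : k ≠ jL := fun e => absurd (e ▸ hjL.trans hk) (lt_irrefl _)
          by_cases hkR : k = jR
          · subst hkR; simp [hkT, hkL, hjR']; omega
          · simp [hkT, hkL, hkR, hRk k hk hkR]
      have hsum := Finset.sum_congr rfl (fun k (_ : k ∈ Finset.univ) => key k)
      simp only [Finset.sum_add_distrib, Finset.sum_ite_eq' Finset.univ,
        Finset.mem_univ, if_true] at hsum
      have : Tot a' + 2 = Tot a + 2 := by
        simpa [Tot] using hsum
      omega
    · refine ⟨jR, ?_, fun k hk => hRk k (hjR.trans hk) (ne_of_gt hk)⟩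
      omega
  · -- only left neighbor: sum increases by 1
    right
    have key : ∀ k, a' k + (if k = jL then 1 else 0) = a k + (if k = T then 2 else 0) := by
      intro k
      rcases lt_trichotomy k T with hk | hk | hk
      · have hkT : k ≠ T := ne_of_lt hk
        by_cases hkL : k = jL
        · subst hkL; simp [hkT, hjL']; omega
        · simp [hkT, hkL, hLk k hk hkL]
      · subst hk
        have h1 : k ≠ jL := fun e => absurd (e ▸ hjL) (lt_irrefl _)
        simp [h1, hT2, hT0]
      · have hkT : k ≠ T := ne_of_gt hk
        have hkL : k ≠ jL := fun e => absurd (e ▸ hjL.trans hk) (lt_irrefl _)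
        simp [hkT, hkL, hRk k hk]
    have hsum := Finset.sum_congr rfl (fun k (_ : k ∈ Finset.univ) => key k)
    simp only [Finset.sum_add_distrib, Finset.sum_ite_eq' Finset.univ,
      Finset.mem_univ, if_true] at hsum
    have : Tot a' + 1 = Tot a + 2 := by simpa [Tot] using hsum
    omega
  · -- only right neighbor: sum increases by 1
    right
    have key : ∀ k, a' k + (if k = jR then 1 else 0) = a k + (if k = T then 2 else 0) := by
      intro k
      rcases lt_trichotomy k T with hk | hk | hk
      · have hkT : k ≠ T := ne_of_lt hk
        have hkR : k ≠ jR := fun e => absurd (e ▸ hk) (not_lt.2 hjR.le)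
        simp [hkT, hkR, hLk k hk]
      · subst hk
        have h2 : k ≠ jR := fun e => absurd (e ▸ hjR) (lt_irrefl _)
        simp [h2, hT2, hT0]
      · have hkT : k ≠ T := ne_of_gt hk
        by_cases hkR : k = jR
        · subst hkR; simp [hkT, hjR']; omega
        · simp [hkT, hkR, hRk k hk hkR]
    have hsum := Finset.sum_congr rfl (fun k (_ : k ∈ Finset.univ) => key k)
    simp only [Finset.sum_add_distrib, Finset.sum_ite_eq' Finset.univ,
      Finset.mem_univ, if_true] at hsum
    have : Tot a' + 1 = Tot a + 2 := by simpa [Tot] using hsum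
    omega
  · -- no neighbors: sum increases by 2
    right
    have key : ∀ k, a' k = a k + (if k = T then 2 else 0) := by
      intro k
      rcases lt_trichotomy k T with hk | hk | hk
      · simp [ne_of_lt hk, hLk k hk]
      · subst hk; simp [hT2, hT0]
      · simp [ne_of_gt hk, hRk k hk]
    have hsum := Finset.sum_congr rfl (fun k (_ : k ∈ Finset.univ) => key k)
    simp only [Finset.sum_add_distrib, Finset.sum_ite_eq' Finset.univ,
      Finset.mem_univ, if_true] at hsum
    have : Tot a' = Tot a + 2 := by simpa [Tot] using hsum
    omega

theorem no_cycle {n : ℕ} :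
    ¬ ∃ (m : ℕ) (s : ℕ → Fin n → ℕ), 0 < m ∧
      (∀ t, t < m → Step (s t) (s (t + 1))) ∧ s m = s 0 := by
  rintro ⟨m, s, hm, hstep, hcyc⟩
  have hstep' : ∀ t, t < m → Tot (s t) ≤ Tot (s (t + 1)) := by
    intro t ht
    obtain ⟨T, hM⟩ := hstep t ht
    rcases move_cases hM with ⟨he, _⟩ | hl
    · omega
    · omega
  have mono : ∀ u, u ≤ m → ∀ t, t ≤ u → Tot (s t) ≤ Tot (s u) := by
    intro u
    induction u with
    | zero => intro _ t ht; interval_cases t; exact le_rfl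
    | succ u ih =>
      intro hu t ht
      rcases Nat.eq_or_lt_of_le ht with h | h
      · subst h; exact le_rfl
      · exact (ih (by omega) t (by omega)).trans (hstep' u (by omega))
  have htot : Tot (s m) = Tot (s 0) := by rw [hcyc]
  have heq : ∀ t, t < m → Tot (s (t + 1)) = Tot (s t) := by
    intro t ht
    have h1 : Tot (s (t + 1)) ≤ Tot (s m) := mono m le_rfl (t + 1) ht
    have h2 : Tot (s 0) ≤ Tot (s t) := mono t (by omega) 0 (by omega)
    have h3 := hstep' t ht
    omega
  have hcol : ∀ t, t < m → ColexF (s (t + 1)) (s t) := by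
    intro t ht
    obtain ⟨T, hM⟩ := hstep t ht
    rcases move_cases hM with ⟨_, hc⟩ | hl
    · exact hc
    · have := heq t ht; omega
  have chain : ∀ t, t ≤ m → 0 < t → ColexF (s t) (s 0) := by
    intro t
    induction t with
    | zero => omega
    | succ t ih =>
      intro h1 _
      rcases Nat.eq_zero_or_pos t with h | h
      · subst h; exact hcol 0 (by omega)
      · exact colex_trans (hcol t (by omega)) (ih (by omega) h)
  obtain ⟨j, hj, _⟩ := hcyc ▸ chain m le_rfl hm
  exact lt_irrefl _ hj
end

section
/- From any initial state a ∈ ℕ^(N-1), every maximal sequence of moves is finite; i.e., after finitely many moves a final state (one with no zero entries) is reached, and no infinite sequence of moves starting at a exists. -/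
/-! ### Auxiliary lemmas -/

lemma ev_const (f : ℕ → ℕ) (t0 : ℕ) (h : ∀ t, t0 ≤ t → f (t+1) ≤ f t) :
    ∃ t1, t0 ≤ t1 ∧ ∀ t, t1 ≤ t → f t = f t1 := by
  obtain ⟨t1, ht1, hft1⟩ : ∃ t1, t0 ≤ t1 ∧ ∀ t, t0 ≤ t → f t1 ≤ f t := by
    have h1 : {v | ∃ t, t0 ≤ t ∧ f t = v}.Nonempty := ⟨f t0, t0, le_rfl, rfl⟩
    obtain ⟨t1, ht1, hv⟩ := Nat.sInf_mem h1
    exact ⟨t1, ht1, fun t ht => hv ▸ Nat.sInf_le ⟨t, ht, rfl⟩⟩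
  refine ⟨t1, ht1, fun t ht => ?_⟩
  have hle : ∀ t, t1 ≤ t → f t ≤ f t1 := by
    intro t ht
    induction t, ht using Nat.le_induction with
    | base => exact le_rfl
    | succ t ht ih => exact (h t (ht1.trans ht)).trans ih
  exact le_antisymm (hle t ht) (hft1 t (ht1.trans ht))

def Sm {n : ℕ} (a : Fin n → ℕ) : ℕ := ∑ i, min (a i) 2

lemma Sm_le {n : ℕ} (a : Fin n → ℕ) : Sm a ≤ 2 * n := by
  have : Sm a ≤ ∑ _i : Fin n, 2 := Finset.sum_le_sum fun i _ => min_le_right _ _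
  simpa [mul_comm] using this

lemma Sm_core {n : ℕ} (a a' : Fin n → ℕ) (T : Fin n) (vL vR : Fin n → ℕ)
    (h0 : a T = 0) (h2 : a' T = 2)
    (hL : ∀ i, i < T → min (a i) 2 ≤ min (a' i) 2 + vL i)
    (hR : ∀ i, T < i → min (a i) 2 ≤ min (a' i) 2 + vR i) :
    Sm a + 2 ≤ Sm a' + ((∑ i, vL i) + (∑ i, vR i)) := by
  have key : ∀ i ∈ Finset.univ, min (a i) 2 + (if i = T then 2 else 0)
      ≤ min (a' i) 2 + (vL i + vR i) := by
    intro i _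
    rcases lt_trichotomy i T with h | h | h
    · rw [if_neg (Fin.ne_of_lt h)]; have := hL i h; omega
    · subst h; rw [if_pos rfl, h0, h2]; omega
    · rw [if_neg (Fin.ne_of_gt h)]; have := hR i h; omega
  have hsum := Finset.sum_le_sum key
  rw [Finset.sum_add_distrib, Finset.sum_add_distrib, Finset.sum_add_distrib,
    Finset.sum_ite_eq' Finset.univ T (fun _ => 2)] at hsum
  simpa [Sm] using hsum

lemma left_v {n : ℕ} {a a' : Fin n → ℕ} {T : Fin n}
    (h : (∃ j : Fin n, j < T ∧ 0 < a j ∧ a' j = a j - 1 ∧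
      (∀ k : Fin n, j < k → k < T → a k = 0) ∧
      (∀ k : Fin n, k < T → k ≠ j → a' k = a k)) ∨
    ((∀ j : Fin n, j < T → a j = 0) ∧ (∀ j : Fin n, j < T → a' j = a j))) :
    ∃ v : Fin n → ℕ, (∑ i, v i) ≤ 1 ∧ ∀ i, i < T → min (a i) 2 ≤ min (a' i) 2 + v i := by
  rcases h with ⟨j, _, hj2, hj3, _, hj5⟩ | ⟨_, hz'⟩
  · refine ⟨fun i => if i = j then 1 else 0,
      by simp [Finset.sum_ite_eq' Finset.univ j (fun _ => 1)], ?_⟩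
    intro i hi
    by_cases hij : i = j
    · subst hij; rw [hj3]; simp; omega
    · rw [hj5 i hi hij]; simp
  · exact ⟨fun _ => 0, by simp, fun i hi => by rw [hz' i hi]; simp⟩

lemma right_v {n : ℕ} {a a' : Fin n → ℕ} {T : Fin n}
    (h : (∃ j : Fin n, T < j ∧ 0 < a j ∧ a' j = a j - 1 ∧
      (∀ k : Fin n, T < k → k < j → a k = 0) ∧
      (∀ k : Fin n, T < k → k ≠ j → a' k = a k)) ∨
    ((∀ j : Fin n, T < j → a j = 0) ∧ (∀ j : Fin n, T < j → a' j = a j))) :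
    ∃ v : Fin n → ℕ, (∑ i, v i) ≤ 1 ∧ ∀ i, T < i → min (a i) 2 ≤ min (a' i) 2 + v i := by
  rcases h with ⟨j, _, hj2, hj3, _, hj5⟩ | ⟨_, hz'⟩
  · refine ⟨fun i => if i = j then 1 else 0,
      by simp [Finset.sum_ite_eq' Finset.univ j (fun _ => 1)], ?_⟩
    intro i hi
    by_cases hij : i = j
    · subst hij; rw [hj3]; simp; omega
    · rw [hj5 i hi hij]; simp
  · exact ⟨fun _ => 0, by simp, fun i hi => by rw [hz' i hi]; simp⟩

lemma move_S_le {n : ℕ} {a a' : Fin n → ℕ} {T : Fin n} (h : Move a a' T) :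
    Sm a ≤ Sm a' := by
  obtain ⟨h0, h2, hLd, hRd⟩ := h
  obtain ⟨vL, hvL, hL⟩ := left_v hLd
  obtain ⟨vR, hvR, hR⟩ := right_v hRd
  have := Sm_core a a' T vL vR h0 h2 hL hR
  omega

lemma move_S_lt {n : ℕ} {a a' : Fin n → ℕ} {T : Fin n} (h : Move a a' T)
    (hr : ∀ k, T < k → a k = 0) : Sm a < Sm a' := by
  obtain ⟨h0, h2, hLd, hRd⟩ := h
  obtain ⟨vL, hvL, hL⟩ := left_v hLd
  have hR : ∀ i, T < i → min (a i) 2 ≤ min (a' i) 2 + (fun _ => 0) i := by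
    rcases hRd with ⟨k, hk1, hk2, _⟩ | ⟨_, hz'⟩
    · exact absurd (hr k hk1) (by omega)
    · intro i hi; rw [hz' i hi]; simp
  have := Sm_core a a' T vL (fun _ => 0) h0 h2 hL hR
  simp at this
  omega

lemma exists_move {n : ℕ} (a : Fin n → ℕ) (T : Fin n) (hT : a T = 0) :
    ∃ a', Move a a' T := by
  classical
  refine ⟨fun i =>
    if i = T then 2
    else if i < T ∧ 0 < a i ∧ (∀ m, i < m → m < T → a m = 0) then a i - 1
    else if T < i ∧ 0 < a i ∧ (∀ m, T < m → m < i → a m = 0) then a i - 1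
    else a i, hT, by simp, ?_, ?_⟩
  · -- left clause
    by_cases hL : ∃ j, j < T ∧ 0 < a j
    · left
      set L := Finset.univ.filter fun j : Fin n => j < T ∧ 0 < a j with hLdef
      have hLne : L.Nonempty := by
        obtain ⟨j, hj1, hj2⟩ := hL; exact ⟨j, by simp [hLdef, hj1, hj2]⟩
      set j := L.max' hLne with hjdef
      have hjmem : j < T ∧ 0 < a j := (Finset.mem_filter.mp (L.max'_mem hLne)).2
      have hjmax : ∀ m, m < T → 0 < a m → m ≤ j := by
        intro m h1 h2; exact L.le_max' m (by simp [hLdef, h1, h2])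
      have hbet : ∀ m, j < m → m < T → a m = 0 := by
        intro m h1 h2
        by_contra hc
        exact absurd (hjmax m h2 (Nat.pos_of_ne_zero hc)) (not_le.mpr h1)
      refine ⟨j, hjmem.1, hjmem.2, ?_, hbet, ?_⟩
      · beta_reduce; rw [if_neg (Fin.ne_of_lt hjmem.1), if_pos ⟨hjmem.1, hjmem.2, hbet⟩]
      · intro m hmT hmj
        beta_reduce; rw [if_neg (Fin.ne_of_lt hmT)]
        rw [if_neg, if_neg]
        · exact fun ⟨h1, _⟩ => absurd h1 (asymm hmT)
        · rintro ⟨h1, h2, h3⟩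
          have hmle : m ≤ j := hjmax m hmT h2
          have hmlt : m < j := lt_of_le_of_ne hmle hmj
          exact absurd (h3 j hmlt hjmem.1) (by omega)
    · right
      push_neg at hL
      have hz : ∀ m, m < T → a m = 0 := fun m hm => Nat.le_zero.mp (hL m hm)
      refine ⟨hz, fun m hm => ?_⟩
      beta_reduce; rw [if_neg (Fin.ne_of_lt hm), if_neg, if_neg]
      · exact fun ⟨h1, _⟩ => absurd h1 (asymm hm)
      · rintro ⟨_, h2, _⟩; exact absurd (hz m hm) (by omega)
  · -- right clause
    by_cases hR : ∃ j, T < j ∧ 0 < a j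
    · left
      set R := Finset.univ.filter fun j : Fin n => T < j ∧ 0 < a j with hRdef
      have hRne : R.Nonempty := by
        obtain ⟨j, hj1, hj2⟩ := hR; exact ⟨j, by simp [hRdef, hj1, hj2]⟩
      set j := R.min' hRne with hjdef
      have hjmem : T < j ∧ 0 < a j := (Finset.mem_filter.mp (R.min'_mem hRne)).2
      have hjmin : ∀ m, T < m → 0 < a m → j ≤ m := by
        intro m h1 h2; exact R.min'_le m (by simp [hRdef, h1, h2])
      have hbet : ∀ m, T < m → m < j → a m = 0 := by
        intro m h1 h2
        by_contra hc
        exact absurd (hjmin m h1 (Nat.pos_of_ne_zero hc)) (not_le.mpr h2)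
      refine ⟨j, hjmem.1, hjmem.2, ?_, hbet, ?_⟩
      · beta_reduce; rw [if_neg (Fin.ne_of_gt hjmem.1), if_neg, if_pos ⟨hjmem.1, hjmem.2, hbet⟩]
        rintro ⟨h1, _⟩; exact absurd h1 (asymm hjmem.1)
      · intro m hmT hmj
        beta_reduce; rw [if_neg (Fin.ne_of_gt hmT), if_neg, if_neg]
        · rintro ⟨h1, h2, h3⟩
          have hmge : j ≤ m := hjmin m hmT h2
          have hmgt : j < m := lt_of_le_of_ne hmge (Ne.symm hmj)
          exact absurd (h3 j hjmem.1 hmgt) (by omega)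
        · rintro ⟨h1, _⟩; exact absurd h1 (asymm hmT)
    · right
      push_neg at hR
      have hz : ∀ m, T < m → a m = 0 := fun m hm => Nat.le_zero.mp (hR m hm)
      refine ⟨hz, fun m hm => ?_⟩
      beta_reduce; rw [if_neg (Fin.ne_of_gt hm), if_neg, if_neg]
      · rintro ⟨_, h2, _⟩; exact absurd (hz m hm) (by omega)
      · rintro ⟨h1, _⟩; exact absurd h1 (asymm hm)

lemma move_restrict {n p : ℕ} (hp : p ≤ n) {a a' : Fin n → ℕ} {T k0 : Fin n}
    (hm : Move a a' T) (hTp : T.val < p)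
    (hk1 : T < k0) (hk3 : a' k0 = a k0 - 1)
    (hk4 : ∀ m : Fin n, T < m → m < k0 → a m = 0)
    (hk5 : ∀ m : Fin n, T < m → m ≠ k0 → a' m = a m)
    (hk2 : 0 < a k0)
    (hk0p : k0.val < p) :
    Move (fun i : Fin p => a (Fin.castLE hp i)) (fun i => a' (Fin.castLE hp i))
      ⟨T.val, hTp⟩ := by
  obtain ⟨h0, h2, hLd, _⟩ := hm
  have hcast : ∀ (v : ℕ) (hv : v < p) (x : Fin n), x.val = v →
      Fin.castLE hp ⟨v, hv⟩ = x := by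
    intro v hv x hx; apply Fin.ext; simp [hx]
  refine ⟨?_, ?_, ?_, Or.inl ⟨⟨k0.val, hk0p⟩, ?_, ?_, ?_, ?_, ?_⟩⟩
  · beta_reduce; rw [hcast T.val hTp T rfl]; exact h0
  · beta_reduce; rw [hcast T.val hTp T rfl]; exact h2
  · rcases hLd with ⟨j, hj1, hj2, hj3, hj4, hj5⟩ | ⟨hz1, hz2⟩
    · have hjp : j.val < p := lt_trans (by exact hj1) hTp
      refine Or.inl ⟨⟨j.val, hjp⟩, ?_, ?_, ?_, ?_, ?_⟩
      · exact hj1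
      · beta_reduce; rw [hcast j.val hjp j rfl]; exact hj2
      · beta_reduce; rw [hcast j.val hjp j rfl]; exact hj3
      · intro k h1 h2
        exact hj4 (Fin.castLE hp k) (by simpa [Fin.lt_def] using h1)
          (by simpa [Fin.lt_def] using h2)
      · intro k h1 h2
        refine hj5 (Fin.castLE hp k) (by simpa [Fin.lt_def] using h1) ?_
        intro hc
        apply h2
        apply Fin.ext
        have : (Fin.castLE hp k).val = j.val := by rw [hc]
        simpa using this
    · refine Or.inr ⟨?_, ?_⟩ <;> intro k hk <;>
        [exact hz1 (Fin.castLE hp k) (by simpa [Fin.lt_def] using hk);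
         exact hz2 (Fin.castLE hp k) (by simpa [Fin.lt_def] using hk)]
  · exact hk1
  · beta_reduce; rw [hcast k0.val hk0p k0 rfl]; exact hk2
  · beta_reduce; rw [hcast k0.val hk0p k0 rfl]; exact hk3
  · intro k h1 h2
    exact hk4 (Fin.castLE hp k) (by simpa [Fin.lt_def] using h1)
      (by simpa [Fin.lt_def] using h2)
  · intro k h1 h2
    refine hk5 (Fin.castLE hp k) (by simpa [Fin.lt_def] using h1) ?_
    intro hc
    apply h2
    apply Fin.ext
    have : (Fin.castLE hp k).val = k0.val := by rw [hc]
    simpa using this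

lemma no_inf_chain : ∀ n : ℕ, ∀ s : ℕ → Fin n → ℕ, ¬ ∀ t, Step (s t) (s (t+1)) := by
  intro n
  induction n using Nat.strong_induction_on with
  | _ n IH =>
  intro s hs
  classical
  choose T hT using hs
  have hn : 0 < n := (T 0).pos
  have hSmono : ∀ t, Sm (s t) ≤ Sm (s (t+1)) := fun t => move_S_le (hT t)
  obtain ⟨t0, -, hconst⟩ := ev_const (fun t => 2*n - Sm (s t)) 0
    (fun t _ => Nat.sub_le_sub_left (hSmono t) _)
  have hSconst : ∀ t, t0 ≤ t → Sm (s t) = Sm (s t0) := by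
    intro t ht
    have h1 : 2*n - Sm (s t) = 2*n - Sm (s t0) := hconst t ht
    have h2 := Sm_le (s t); have h3 := Sm_le (s t0)
    omega
  have hR : ∀ t, t0 ≤ t → ∃ k, T t < k ∧ 0 < s t k := by
    intro t ht
    by_contra hc; push_neg at hc
    have hz : ∀ k, T t < k → s t k = 0 := fun k hk => Nat.le_zero.mp (hc k hk)
    have hlt := move_S_lt (hT t) hz
    have e1 := hSconst t ht
    have e2 := hSconst (t+1) (ht.trans (Nat.le_succ t))
    omega
  set pos : (Fin n → ℕ) → Finset (Fin n) :=
    fun a => Finset.univ.filter fun i => 0 < a i with hposdef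
  have hpos : ∀ t, t0 ≤ t → (pos (s t)).Nonempty := by
    intro t ht; obtain ⟨k, _, hk2⟩ := hR t ht
    exact ⟨k, by simp [hposdef, hk2]⟩
  set P : ℕ → Fin n :=
    fun t => if h : (pos (s t)).Nonempty then (pos (s t)).max' h else ⟨0, hn⟩ with hPdef
  have hPeq : ∀ t (h : (pos (s t)).Nonempty), P t = (pos (s t)).max' h := by
    intro t h; simp [hPdef, dif_pos h]
  have hPmem : ∀ t, t0 ≤ t → 0 < s t (P t) := by
    intro t ht
    have h := hpos t ht
    rw [hPeq t h]
    have := (pos (s t)).max'_mem h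
    exact (Finset.mem_filter.mp this).2
  have hPle : ∀ t, t0 ≤ t → ∀ i, 0 < s t i → i ≤ P t := by
    intro t ht i hi
    have h := hpos t ht
    rw [hPeq t h]
    exact Finset.le_max' _ i (by simp [hposdef, hi])
  have hRex : ∀ t, t0 ≤ t → ∃ k, T t < k ∧ 0 < s t k ∧ s (t+1) k = s t k - 1 ∧
      (∀ m : Fin n, T t < m → m < k → s t m = 0) ∧
      (∀ m : Fin n, T t < m → m ≠ k → s (t+1) m = s t m) := by
    intro t ht
    rcases (hT t).2.2.2 with ⟨k, h1, h2, h3, h4, h5⟩ | ⟨hz, _⟩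
    · exact ⟨k, h1, h2, h3, h4, h5⟩
    · obtain ⟨k, hk1, hk2⟩ := hR t ht
      exact absurd (hz k hk1) (by omega)
  have hPmono : ∀ t, t0 ≤ t → (P (t+1)).val ≤ (P t).val := by
    intro t ht
    have ht' : t0 ≤ t + 1 := ht.trans (Nat.le_succ t)
    have hgen : ∀ i, 0 < s (t+1) i → i ≤ P t := by
      intro i hi
      obtain ⟨k0, hk0T, hk0pos, hk0dec, hbet, hoth⟩ := hRex t ht
      rcases lt_trichotomy i (T t) with hlt | heq | hgt
      · have hia : 0 < s t i := by
          rcases (hT t).2.2.1 with ⟨j, hj1, hj2, hj3, hj4, hj5⟩ | ⟨hz, hz'⟩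
          · by_cases hij : i = j
            · rw [hij]; exact hj2
            · rwa [hj5 i hlt hij] at hi
          · rw [hz' i hlt, hz i hlt] at hi; exact absurd hi (lt_irrefl 0)
        exact hPle t ht i hia
      · rw [heq]; exact le_of_lt (lt_of_lt_of_le hk0T (hPle t ht k0 hk0pos))
      · by_cases hik : i = k0
        · rw [hik]; exact hPle t ht k0 hk0pos
        · rw [hoth i hgt hik] at hi; exact hPle t ht i hi
    exact hgen (P (t+1)) (hPmem (t+1) ht')
  obtain ⟨t1, ht01, hPc'⟩ := ev_const (fun t => (P t).val) t0 hPmono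
  have hPc : ∀ t, t1 ≤ t → P t = P t1 := by
    intro t ht
    exact Fin.ext (show (P t).val = (P t1).val from hPc' t ht)
  set P1 := P t1 with hP1
  have hP1pos : ∀ t, t1 ≤ t → 0 < s t P1 := by
    intro t ht; have := hPmem t (ht01.trans ht); rwa [hPc t ht] at this
  have hP1le : ∀ t, t1 ≤ t → ∀ i, 0 < s t i → i ≤ P1 := by
    intro t ht i hi; have := hPle t (ht01.trans ht) i hi; rwa [hPc t ht] at this
  have hTlt : ∀ t, t1 ≤ t → T t < P1 := by
    intro t ht
    obtain ⟨k0, hk0T, hk0pos, _, _, _⟩ := hRex t (ht01.trans ht)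
    exact lt_of_lt_of_le hk0T (hP1le t ht k0 hk0pos)
  have hvmono : ∀ t, t1 ≤ t → s (t+1) P1 ≤ s t P1 := by
    intro t ht
    obtain ⟨k0, hk0T, hk0pos, hdec, _, hoth⟩ := hRex t (ht01.trans ht)
    by_cases h : P1 = k0
    · rw [h, hdec]; omega
    · rw [hoth P1 (hTlt t ht) h]
  obtain ⟨t2, ht12, hvc⟩ := ev_const (fun t => s t P1) t1 hvmono
  have hvconst : ∀ t, t2 ≤ t → s t P1 = s t2 P1 := fun t ht => hvc t ht
  have hk0lt : ∀ t, t2 ≤ t → ∃ k0, T t < k0 ∧ 0 < s t k0 ∧ s (t+1) k0 = s t k0 - 1 ∧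
      (∀ m : Fin n, T t < m → m < k0 → s t m = 0) ∧
      (∀ m : Fin n, T t < m → m ≠ k0 → s (t+1) m = s t m) ∧ k0.val < P1.val := by
    intro t ht
    have ht1' : t1 ≤ t := ht12.trans ht
    obtain ⟨k0, h1, h2, h3, h4, h5⟩ := hRex t (ht01.trans ht1')
    refine ⟨k0, h1, h2, h3, h4, h5, ?_⟩
    have hle : k0 ≤ P1 := hP1le t ht1' k0 h2
    rcases lt_or_eq_of_le hle with h | h
    · exact h
    · exfalso
      have e1 := hvconst t ht
      have e2 := hvconst (t+1) (ht.trans (Nat.le_succ t))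
      rw [← h] at e1 e2
      omega
  set p := P1.val with hpdef
  have hple : p ≤ n := le_of_lt P1.isLt
  have hstep : ∀ t, Step (fun i : Fin p => s (t2 + t) (Fin.castLE hple i))
      (fun i : Fin p => s (t2 + t + 1) (Fin.castLE hple i)) := by
    intro t
    have hτ : t2 ≤ t2 + t := Nat.le_add_right _ _
    obtain ⟨k0, h1, h2, h3, h4, h5, h6⟩ := hk0lt (t2+t) hτ
    have hTv : (T (t2+t)).val < p := hTlt (t2+t) (ht12.trans hτ)
    exact ⟨⟨(T (t2+t)).val, hTv⟩,
      move_restrict hple (hT (t2+t)) hTv h1 h3 h4 h5 h2 h6⟩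
  exact IH p P1.isLt (fun t i => s (t2 + t) (Fin.castLE hple i)) (fun t => hstep t)

theorem termination {n : ℕ} (a : Fin n → ℕ) :
    (∃ (m : ℕ) (s : ℕ → Fin n → ℕ), s 0 = a ∧
      (∀ t, t < m → Step (s t) (s (t + 1))) ∧ ∀ i, s m i ≠ 0) ∧
    ¬ ∃ s : ℕ → Fin n → ℕ, s 0 = a ∧ ∀ t, Step (s t) (s (t + 1)) := by
  classical
  constructor
  · let g : ℕ → Fin n → ℕ := fun t =>
      Nat.rec a (fun _ prev => if h : ∃ b, Step prev b then h.choose else prev) t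
    have hgs : ∀ t, g (t+1) = if h : ∃ b, Step (g t) b then h.choose else g t :=
      fun t => rfl
    haveI : DecidablePred (fun m => ∀ i : Fin n, g m i ≠ 0) :=
      fun _ => Classical.propDecidable _
    rcases Classical.em (∃ m, ∀ i, g m i ≠ 0) with hfin | hfin
    · refine ⟨Nat.find hfin, g, rfl, ?_, Nat.find_spec hfin⟩
      intro t htm
      have hnotfin := Nat.find_min hfin htm
      push_neg at hnotfin
      obtain ⟨i, hi⟩ := hnotfin
      obtain ⟨a', ha'⟩ := exists_move (g t) i hi
      have hex : ∃ b, Step (g t) b := ⟨a', i, ha'⟩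
      rw [hgs t, dif_pos hex]
      exact hex.choose_spec
    · exfalso
      push_neg at hfin
      have hchain : ∀ t, Step (g t) (g (t+1)) := by
        intro t
        obtain ⟨i, hi⟩ := hfin t
        obtain ⟨a', ha'⟩ := exists_move (g t) i hi
        have hex : ∃ b, Step (g t) b := ⟨a', i, ha'⟩
        rw [hgs t, dif_pos hex]
        exact hex.choose_spec
      exact no_inf_chain n g hchain
  · rintro ⟨s, hs0, hs⟩
    exact no_inf_chain n s hs
end

section
/- If a move is applied to a state a and T is the triggering position with all entries a_j = 0 for j < T (i.e., no positive entry to the left of T), then the norm strictly increases: |a'| > |a|. -/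
theorem norm_increases_of_left_zero {n : ℕ} (a a' : Fin n → ℕ) (T : Fin n)
    (h : Move a a' T) (hl : ∀ j : Fin n, j < T → a j = 0) :
    ∑ i, a i < ∑ i, a' i := by
  obtain ⟨haT, haT', hleft, hright⟩ := h
  -- left entries of a' agree with a
  have hL : ∀ k : Fin n, k < T → a' k = a k := by
    rcases hleft with ⟨j, hjT, hpos, _⟩ | ⟨_, h2⟩
    · exact absurd (hl j hjT) (by omega)
    · exact h2
  rcases hright with ⟨j, hTj, hpos, haj', _, hrest⟩ | ⟨_, h2⟩
  · -- decrement case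
    have hne : T ≠ j := ne_of_lt hTj
    have hTmem : T ∈ (Finset.univ : Finset (Fin n)) := Finset.mem_univ T
    have hjmem : j ∈ (Finset.univ.erase T) := Finset.mem_erase.mpr ⟨hne.symm, Finset.mem_univ j⟩
    have hrest' : ∀ k ∈ (Finset.univ.erase T).erase j, a' k = a k := by
      intro k hk
      rcases Finset.mem_erase.mp hk with ⟨hkj, hk'⟩
      rcases Finset.mem_erase.mp hk' with ⟨hkT, _⟩
      rcases lt_or_gt_of_ne hkT with hlt | hgt
      · exact hL k hlt
      · exact hrest k hgt hkj
    have e1 : a T + (a j + ∑ k ∈ (Finset.univ.erase T).erase j, a k) = ∑ i, a i := by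
      rw [Finset.add_sum_erase _ a hjmem, Finset.add_sum_erase _ a hTmem]
    have e2 : a' T + (a' j + ∑ k ∈ (Finset.univ.erase T).erase j, a' k) = ∑ i, a' i := by
      rw [Finset.add_sum_erase _ a' hjmem, Finset.add_sum_erase _ a' hTmem]
    have e3 : ∑ k ∈ (Finset.univ.erase T).erase j, a' k
        = ∑ k ∈ (Finset.univ.erase T).erase j, a k := Finset.sum_congr rfl hrest'
    omega
  · -- no decrement on the right
    have hall : ∀ k ∈ (Finset.univ : Finset (Fin n)), a k ≤ a' k := by
      intro k _
      rcases lt_trichotomy k T with hlt | heq | hgt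
      · rw [hL k hlt]
      · subst heq; omega
      · rw [h2 k hgt]
    refine Finset.sum_lt_sum hall ⟨T, Finset.mem_univ T, by omega⟩
end

section
/- Starting from the all-zero state 0^(N-1), every state a^t reachable by a sequence of moves satisfies: for every contiguous window of length l, the sum of the entries in that window is at most l + 1. That is, for all i and l with the window in range, a^t_i + a^t_{i+1} + ... + a^t_{i+l-1} ≤ l + 1. -/
open Finset

/-- Window sum of a state over indices in `[lo, hi)`. -/
def WSum {n : ℕ} (a : Fin n → ℕ) (lo hi : ℕ) : ℕ :=
  ∑ j ∈ Finset.univ.filter (fun j : Fin n => lo ≤ (j : ℕ) ∧ (j : ℕ) < hi), a j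

lemma WSum_split {n : ℕ} (a : Fin n → ℕ) {lo m hi : ℕ} (h1 : lo ≤ m) (h2 : m ≤ hi) :
    WSum a lo hi = WSum a lo m + WSum a m hi := by
  unfold WSum
  rw [← Finset.sum_union]
  · congr 1
    ext j
    simp only [mem_union, mem_filter, mem_univ, true_and]
    omega
  · rw [Finset.disjoint_left]
    intro j hj hj'
    simp only [mem_filter, mem_univ, true_and] at hj hj'
    omega

lemma WSum_singleton {n : ℕ} (a : Fin n → ℕ) (T : Fin n) :
    WSum a (T : ℕ) ((T : ℕ) + 1) = a T := by
  unfold WSum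
  rw [show Finset.univ.filter (fun j : Fin n => (T : ℕ) ≤ (j : ℕ) ∧ (j : ℕ) < (T : ℕ) + 1)
        = {T} from ?_]
  · simp
  · ext j
    simp only [mem_filter, mem_univ, true_and, mem_singleton]
    constructor
    · rintro ⟨h1, h2⟩
      exact Fin.ext (by omega)
    · rintro rfl
      omega

lemma WSum_zero {n : ℕ} (a : Fin n → ℕ) {lo hi : ℕ}
    (hz : ∀ j : Fin n, lo ≤ (j : ℕ) → (j : ℕ) < hi → a j = 0) :
    WSum a lo hi = 0 := by
  apply Finset.sum_eq_zero
  intro j hj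
  simp only [mem_filter, mem_univ, true_and] at hj
  exact hz j hj.1 hj.2

lemma WSum_dec {n : ℕ} (b c : Fin n → ℕ) {lo hi : ℕ} (j : Fin n)
    (hjlo : lo ≤ (j : ℕ)) (hjhi : (j : ℕ) < hi)
    (hcj : c j + 1 = b j)
    (hk : ∀ k : Fin n, lo ≤ (k : ℕ) → (k : ℕ) < hi → k ≠ j → c k = b k) :
    WSum c lo hi + 1 = WSum b lo hi := by
  unfold WSum
  have hmem : j ∈ Finset.univ.filter (fun k : Fin n => lo ≤ (k : ℕ) ∧ (k : ℕ) < hi) := by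
    simp [hjlo, hjhi]
  have hcongr : ∀ k ∈ Finset.univ.filter (fun k : Fin n => lo ≤ (k : ℕ) ∧ (k : ℕ) < hi),
      b k = c k + (if k = j then 1 else 0) := by
    intro k hk'
    simp only [mem_filter, mem_univ, true_and] at hk'
    by_cases h : k = j
    · subst h; simp [← hcj]
    · simp [h, hk k hk'.1 hk'.2 h]
  rw [Finset.sum_congr rfl hcongr, Finset.sum_add_distrib,
      Finset.sum_ite_eq' _ j (fun _ => 1), if_pos hmem]

lemma step_inv {n : ℕ} {b c : Fin n → ℕ} (hbc : Step b c)
    (ih : ∀ i l : ℕ, i + l ≤ n → WSum b i (i + l) ≤ l + 1)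
    (i l : ℕ) (hil : i + l ≤ n) : WSum c i (i + l) ≤ l + 1 := by
  obtain ⟨T, hT0, hT2, hL, hR⟩ := hbc
  by_cases hTin : i ≤ (T : ℕ) ∧ (T : ℕ) < i + l
  · -- T inside the window
    have hl1 : 1 ≤ l := by omega
    -- left dichotomy
    have hleft : WSum c i (T : ℕ) + 1 = WSum b i (T : ℕ) ∨ WSum c i (T : ℕ) = 0 := by
      rcases hL with ⟨j, hjT, hjpos, hjdec, hjzero, hjother⟩ | ⟨hzero, heq⟩
      · by_cases hij : i ≤ (j : ℕ)
        · left
          refine WSum_dec b c j hij (by exact hjT) (by omega) ?_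
          intro k hk1 hk2 hkj
          exact hjother k (by exact hk2) hkj
        · right
          apply WSum_zero
          intro k hk1 hk2
          have hkj : k ≠ j := by
            intro h; subst h; omega
          have := hjother k (by exact hk2) hkj
          rw [this]
          exact hjzero k (by omega) (by exact hk2)
      · right
        apply WSum_zero
        intro k hk1 hk2
        rw [heq k (by exact hk2)]
        exact hzero k (by exact hk2)
    -- right dichotomy
    have hright : WSum c ((T : ℕ) + 1) (i + l) + 1 = WSum b ((T : ℕ) + 1) (i + l) ∨
        WSum c ((T : ℕ) + 1) (i + l) = 0 := by
      rcases hR with ⟨j, hjT, hjpos, hjdec, hjzero, hjother⟩ | ⟨hzero, heq⟩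
      · by_cases hij : (j : ℕ) < i + l
        · left
          have hjT' : (T : ℕ) < (j : ℕ) := hjT
          refine WSum_dec b c j (by omega) hij (by omega) ?_
          intro k hk1 hk2 hkj
          exact hjother k (by omega) hkj
        · right
          apply WSum_zero
          intro k hk1 hk2
          have hkj : k ≠ j := by
            intro h; subst h; omega
          have := hjother k (by omega) hkj
          rw [this]
          exact hjzero k (by omega) (by omega)
      · right
        apply WSum_zero
        intro k hk1 hk2
        rw [heq k (by omega)]
        exact hzero k (by omega)
    have esplit : WSum c i (i + l)
        = WSum c i (T : ℕ) + c T + WSum c ((T : ℕ) + 1) (i + l) := by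
      rw [WSum_split c (by omega : i ≤ (T : ℕ)) (by omega : (T : ℕ) ≤ i + l),
          WSum_split c (by omega : (T : ℕ) ≤ (T : ℕ) + 1) (by omega : (T : ℕ) + 1 ≤ i + l),
          WSum_singleton]
      ring
    have ebsplit : WSum b i (i + l)
        = WSum b i (T : ℕ) + WSum b ((T : ℕ) + 1) (i + l) := by
      rw [WSum_split b (by omega : i ≤ (T : ℕ)) (by omega : (T : ℕ) ≤ i + l),
          WSum_split b (by omega : (T : ℕ) ≤ (T : ℕ) + 1) (by omega : (T : ℕ) + 1 ≤ i + l),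
          WSum_singleton, hT0]
      ring
    rcases hleft with hA | hB <;> rcases hright with hA' | hB'
    · have := ih i l hil
      omega
    · -- left decremented, right all zero
      have hLb : WSum b i (i + ((T : ℕ) - i)) ≤ ((T : ℕ) - i) + 1 :=
        ih i ((T : ℕ) - i) (by omega)
      have e : i + ((T : ℕ) - i) = (T : ℕ) := by omega
      rw [e] at hLb
      omega
    · -- left all zero, right decremented
      have hRb : WSum b ((T : ℕ) + 1) ((T : ℕ) + 1 + (i + l - (T : ℕ) - 1))
          ≤ (i + l - (T : ℕ) - 1) + 1 := ih ((T : ℕ) + 1) (i + l - (T : ℕ) - 1) (by omega)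
      have e : (T : ℕ) + 1 + (i + l - (T : ℕ) - 1) = i + l := by omega
      rw [e] at hRb
      omega
    · omega
  · -- T outside the window: entries can only decrease
    have hle : ∀ k : Fin n, i ≤ (k : ℕ) → (k : ℕ) < i + l → c k ≤ b k := by
      intro k hk1 hk2
      have hkT : k < T ∨ T < k := by
        rcases lt_trichotomy k T with h | h | h
        · exact Or.inl h
        · exfalso; subst h; omega
        · exact Or.inr h
      rcases hkT with hkT | hkT
      · rcases hL with ⟨j, hjT, hjpos, hjdec, hjzero, hjother⟩ | ⟨hzero, heq⟩
        · by_cases hkj : k = j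
          · subst hkj; omega
          · rw [hjother k hkT hkj]
        · rw [heq k hkT]
      · rcases hR with ⟨j, hjT, hjpos, hjdec, hjzero, hjother⟩ | ⟨hzero, heq⟩
        · by_cases hkj : k = j
          · subst hkj; omega
          · rw [hjother k hkT hkj]
        · rw [heq k hkT]
    have : WSum c i (i + l) ≤ WSum b i (i + l) := by
      apply Finset.sum_le_sum
      intro k hk
      simp only [mem_filter, mem_univ, true_and] at hk
      exact hle k hk.1 hk.2
    exact le_trans this (ih i l hil)

theorem window_sum_bound {n : ℕ} (a : Fin n → ℕ)
    (h : Reach (fun _ => 0) a) (i l : ℕ) (hil : i + l ≤ n) :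
    ∑ j ∈ Finset.univ.filter (fun j : Fin n => i ≤ (j : ℕ) ∧ (j : ℕ) < i + l), a j
      ≤ l + 1 := by
  have main : ∀ i l : ℕ, i + l ≤ n → WSum a i (i + l) ≤ l + 1 := by
    induction h with
    | refl => intro i l _; simp [WSum]
    | tail _ hbc ih => exact step_inv hbc ih
  exact main i l hil
end

section
/- Starting from the all-zero state 0^(N-1), every reachable state has norm at most N (sum of all entries ≤ N). -/
/-- The window invariant: every interval has sum at most its length plus one. -/
def Window {n : ℕ} (a : Fin n → ℕ) : Prop :=
  ∀ i j : Fin n, ∑ k ∈ Finset.Icc i j, a k ≤ (j : ℕ) - (i : ℕ) + 2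

lemma move_le {n : ℕ} {a a' : Fin n → ℕ} {T : Fin n} (h : Move a a' T)
    {k : Fin n} (hk : k ≠ T) : a' k ≤ a k := by
  obtain ⟨_, _, hL, hR⟩ := h
  rcases lt_trichotomy k T with hlt | heq | hgt
  · rcases hL with ⟨j, _, _, hj3, _, hj5⟩ | ⟨_, h2⟩
    · by_cases hkj : k = j
      · subst hkj; rw [hj3]; exact Nat.sub_le _ _
      · rw [hj5 k hlt hkj]
    · rw [h2 k hlt]
  · exact absurd heq hk
  · rcases hR with ⟨j, _, _, hj3, _, hj5⟩ | ⟨_, h2⟩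
    · by_cases hkj : k = j
      · subst hkj; rw [hj3]; exact Nat.sub_le _ _
      · rw [hj5 k hgt hkj]
    · rw [h2 k hgt]

lemma sum_pred {n : ℕ} {a a' : Fin n → ℕ} (s : Finset (Fin n)) {j : Fin n}
    (hj : j ∈ s) (hpos : 0 < a j) (hj' : a' j = a j - 1)
    (hoth : ∀ k ∈ s, k ≠ j → a' k = a k) :
    (∑ k ∈ s, a' k) + 1 = ∑ k ∈ s, a k := by
  rw [← Finset.add_sum_erase s a' hj, ← Finset.add_sum_erase s a hj]
  have : ∑ k ∈ s.erase j, a' k = ∑ k ∈ s.erase j, a k := by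
    refine Finset.sum_congr rfl fun k hk => ?_
    exact hoth k (Finset.mem_of_mem_erase hk) (Finset.ne_of_mem_erase hk)
  rw [this, hj']
  omega

lemma left_bound {n : ℕ} {a a' : Fin n → ℕ} {T : Fin n} (hW : Window a)
    (h : Move a a' T) (i : Fin n) :
    ∑ k ∈ Finset.Ico i T, a' k ≤ (T : ℕ) - (i : ℕ) := by
  obtain ⟨_, _, hL, _⟩ := h
  rcases hL with ⟨j, hjT, hjpos, hj3, hj4, hj5⟩ | ⟨hz, h2⟩
  · by_cases hij : i ≤ j
    · have hsub : Finset.Icc i j ⊆ Finset.Ico i T := by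
        intro k hk
        rw [Finset.mem_Icc] at hk
        rw [Finset.mem_Ico]
        exact ⟨hk.1, lt_of_le_of_lt hk.2 hjT⟩
      have hzero : ∀ k ∈ Finset.Ico i T, k ∉ Finset.Icc i j → a' k = 0 := by
        intro k hk hk'
        rw [Finset.mem_Ico] at hk
        rw [Finset.mem_Icc] at hk'
        push_neg at hk'
        have hjk : j < k := hk' hk.1
        rw [hj5 k hk.2 (ne_of_gt hjk)]
        exact hj4 k hjk hk.2
      rw [← Finset.sum_subset hsub hzero]
      have hmem : j ∈ Finset.Icc i j := Finset.mem_Icc.mpr ⟨hij, le_refl _⟩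
      have key := sum_pred (a := a) (a' := a') (Finset.Icc i j) hmem hjpos hj3
        (fun k hk hkj => hj5 k (lt_of_le_of_lt (Finset.mem_Icc.mp hk).2 hjT) hkj)
      have hw := hW i j
      have h1 : (i : ℕ) ≤ (j : ℕ) := hij
      have h2 : (j : ℕ) < (T : ℕ) := hjT
      omega
    · have : ∀ k ∈ Finset.Ico i T, a' k = 0 := by
        intro k hk
        rw [Finset.mem_Ico] at hk
        have hjk : j < k := lt_of_lt_of_le (lt_of_not_ge hij) hk.1
        rw [hj5 k hk.2 (ne_of_gt hjk)]
        exact hj4 k hjk hk.2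
      rw [Finset.sum_eq_zero this]
      exact Nat.zero_le _
  · have : ∀ k ∈ Finset.Ico i T, a' k = 0 := by
      intro k hk
      rw [Finset.mem_Ico] at hk
      rw [h2 k hk.2]
      exact hz k hk.2
    rw [Finset.sum_eq_zero this]
    exact Nat.zero_le _

lemma right_bound {n : ℕ} {a a' : Fin n → ℕ} {T : Fin n} (hW : Window a)
    (h : Move a a' T) (j : Fin n) :
    ∑ k ∈ Finset.Ioc T j, a' k ≤ (j : ℕ) - (T : ℕ) := by
  obtain ⟨_, _, _, hR⟩ := h
  rcases hR with ⟨m, hTm, hmpos, hm3, hm4, hm5⟩ | ⟨hz, h2⟩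
  · by_cases hmj : m ≤ j
    · have hsub : Finset.Icc m j ⊆ Finset.Ioc T j := by
        intro k hk
        rw [Finset.mem_Icc] at hk
        rw [Finset.mem_Ioc]
        exact ⟨lt_of_lt_of_le hTm hk.1, hk.2⟩
      have hzero : ∀ k ∈ Finset.Ioc T j, k ∉ Finset.Icc m j → a' k = 0 := by
        intro k hk hk'
        rw [Finset.mem_Ioc] at hk
        rw [Finset.mem_Icc] at hk'
        push_neg at hk'
        have hkm : k < m := by
          by_contra hc
          exact absurd (hk' (le_of_not_gt hc)) (not_lt.mpr hk.2)
        rw [hm5 k hk.1 (ne_of_lt hkm)]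
        exact hm4 k hk.1 hkm
      rw [← Finset.sum_subset hsub hzero]
      have hmem : m ∈ Finset.Icc m j := Finset.mem_Icc.mpr ⟨le_refl _, hmj⟩
      have key := sum_pred (a := a) (a' := a') (Finset.Icc m j) hmem hmpos hm3
        (fun k hk hkm => hm5 k (lt_of_lt_of_le hTm (Finset.mem_Icc.mp hk).1) hkm)
      have hw := hW m j
      have h1 : (m : ℕ) ≤ (j : ℕ) := hmj
      have h2 : (T : ℕ) < (m : ℕ) := hTm
      omega
    · have : ∀ k ∈ Finset.Ioc T j, a' k = 0 := by
        intro k hk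
        rw [Finset.mem_Ioc] at hk
        have hkm : k < m := lt_of_le_of_lt hk.2 (lt_of_not_ge hmj)
        rw [hm5 k hk.1 (ne_of_lt hkm)]
        exact hm4 k hk.1 hkm
      rw [Finset.sum_eq_zero this]
      exact Nat.zero_le _
  · have : ∀ k ∈ Finset.Ioc T j, a' k = 0 := by
      intro k hk
      rw [Finset.mem_Ioc] at hk
      rw [h2 k hk.1]
      exact hz k hk.1
    rw [Finset.sum_eq_zero this]
    exact Nat.zero_le _

lemma step_preserves {n : ℕ} {a a' : Fin n → ℕ} (hW : Window a)
    (h : Step a a') : Window a' := by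
  obtain ⟨T, hmove⟩ := h
  intro i j
  by_cases hT : i ≤ T ∧ T ≤ j
  · obtain ⟨hiT, hTj⟩ := hT
    have hc1 : (i : ℕ) ≤ (T : ℕ) := hiT
    have hc2 : (T : ℕ) ≤ (j : ℕ) := hTj
    have hsplit : Finset.Icc i j = Finset.Ico i T ∪ Finset.Icc T j := by
      ext k
      simp only [Finset.mem_Icc, Finset.mem_Ico, Finset.mem_union, Fin.le_def,
        Fin.lt_def]
      omega
    have hdisj : Disjoint (Finset.Ico i T) (Finset.Icc T j) := by
      rw [Finset.disjoint_left]
      intro k hk hk'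
      rw [Finset.mem_Ico] at hk
      rw [Finset.mem_Icc] at hk'
      exact absurd hk'.1 (not_le.mpr hk.2)
    rw [hsplit, Finset.sum_union hdisj]
    have hTmem : T ∈ Finset.Icc T j := Finset.mem_Icc.mpr ⟨le_refl _, hTj⟩
    rw [← Finset.add_sum_erase _ a' hTmem, Finset.Icc_erase_left]
    have h1 := left_bound hW hmove i
    have h2 := right_bound hW hmove j
    have hT2 : a' T = 2 := hmove.2.1
    omega
  · have hle : ∀ k ∈ Finset.Icc i j, a' k ≤ a k := by
      intro k hk
      rw [Finset.mem_Icc] at hk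
      refine move_le hmove fun hkT => ?_
      subst hkT
      exact hT ⟨hk.1, hk.2⟩
    exact le_trans (Finset.sum_le_sum hle) (hW i j)

theorem norm_le_of_reachable {n : ℕ} (a : Fin n → ℕ)
    (h : Reach (fun _ => 0) a) : ∑ i, a i ≤ n + 1 := by
  have hW : Window a := by
    unfold Reach at h
    induction h with
    | refl => intro i j; simp
    | tail _ hstep ih => exact step_preserves ih hstep
  cases n with
  | zero => simp
  | succ m =>
    have huniv : Finset.Icc (0 : Fin (m + 1)) (Fin.last m) = Finset.univ := by
      apply Finset.eq_univ_iff_forall.mpr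
      intro k
      exact Finset.mem_Icc.mpr ⟨Fin.zero_le k, Fin.le_last k⟩
    have := hW 0 (Fin.last m)
    rw [huniv] at this
    simpa using this
end

section
/- Every final state reachable from the all-zero state 0^(N-1) (with N ≥ 2) is of the form 1^k 2 1^(N-2-k) for some k ∈ {0, ..., N-2}, i.e., it consists of exactly one entry equal to 2 and all other entries equal to 1. -/
/-- Invariant: all entries are at most 2, and between any two entries equal to 2
there is a zero entry. -/
def StateInv {n : ℕ} (a : Fin n → ℕ) : Prop :=
  (∀ i, a i ≤ 2) ∧ ∀ p q : Fin n, p < q → a p = 2 → a q = 2 →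
    ∃ z : Fin n, p < z ∧ z < q ∧ a z = 0

lemma move_inv {n : ℕ} {a a' : Fin n → ℕ} {T : Fin n}
    (hI : StateInv a) (hm : Move a a' T) : StateInv a' := by
  obtain ⟨hT0, hT2, hL, hR⟩ := hm
  obtain ⟨hle, hinv⟩ := hI
  -- every entry other than T is unchanged or a decrement of a positive entry
  have helper : ∀ i : Fin n, i ≠ T → (a' i = a i) ∨ (0 < a i ∧ a' i = a i - 1) := by
    intro i hi
    rcases lt_trichotomy i T with hlt | heq | hgt
    · rcases hL with ⟨j, hjT, hpos, hdec, hgap, hoth⟩ | ⟨hz, hid⟩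
      · by_cases hij : i = j
        · subst hij; exact Or.inr ⟨hpos, hdec⟩
        · exact Or.inl (hoth i hlt hij)
      · exact Or.inl (hid i hlt)
    · exact absurd heq hi
    · rcases hR with ⟨j, hjT, hpos, hdec, hgap, hoth⟩ | ⟨hz, hid⟩
      · by_cases hij : i = j
        · subst hij; exact Or.inr ⟨hpos, hdec⟩
        · exact Or.inl (hoth i hgt hij)
      · exact Or.inl (hid i hgt)
  have h2 : ∀ i : Fin n, i ≠ T → a' i = 2 → a i = 2 := by
    intro i hi h
    rcases helper i hi with heq | ⟨hpos, hdec⟩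
    · omega
    · have := hle i; omega
  have hzero : ∀ z : Fin n, z ≠ T → a z = 0 → a' z = 0 := by
    intro z hz h0
    rcases helper z hz with heq | ⟨hpos, _⟩
    · omega
    · omega
  constructor
  · intro i
    by_cases hi : i = T
    · subst hi; omega
    · rcases helper i hi with heq | ⟨hpos, hdec⟩ <;> have := hle i <;> omega
  -- side lemmas
  have haux_l : ∀ p : Fin n, p < T → a' p = 2 → ∃ z : Fin n, p < z ∧ z < T ∧ a' z = 0 := by
    intro p hpT hp2
    have hap : a p = 2 := h2 p (ne_of_lt hpT) hp2
    rcases hL with ⟨j, hjT, hpos, hdec, hgap, hoth⟩ | ⟨hz, _⟩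
    · have hpj : p ≤ j := by
        by_contra hc
        push_neg at hc
        have := hgap p hc hpT
        omega
      have hpj' : p ≠ j := by
        intro hpe; subst hpe
        have := hle p; omega
      have hplt : p < j := lt_of_le_of_ne hpj hpj'
      have haj := hle j
      by_cases hj1 : a j = 1
      · exact ⟨j, hplt, hjT, by omega⟩
      · have hj2 : a j = 2 := by omega
        obtain ⟨z, hz1, hz2, hz0⟩ := hinv p j hplt hap hj2
        exact ⟨z, hz1, lt_trans hz2 hjT,
          hzero z (ne_of_lt (lt_trans hz2 hjT)) hz0⟩
    · exact absurd (hz p hpT) (by omega)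
  have haux_r : ∀ q : Fin n, T < q → a' q = 2 → ∃ z : Fin n, T < z ∧ z < q ∧ a' z = 0 := by
    intro q hTq hq2
    have haq : a q = 2 := h2 q (ne_of_gt hTq) hq2
    rcases hR with ⟨j, hjT, hpos, hdec, hgap, hoth⟩ | ⟨hz, _⟩
    · have hpj : j ≤ q := by
        by_contra hc
        push_neg at hc
        have := hgap q hTq hc
        omega
      have hpj' : j ≠ q := by
        intro hpe; subst hpe
        have := hle j; omega
      have hplt : j < q := lt_of_le_of_ne hpj hpj'
      have haj := hle j
      by_cases hj1 : a j = 1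
      · exact ⟨j, hjT, hplt, by omega⟩
      · have hj2 : a j = 2 := by omega
        obtain ⟨z, hz1, hz2, hz0⟩ := hinv j q hplt hj2 haq
        exact ⟨z, lt_trans hjT hz1, hz2,
          hzero z (ne_of_gt (lt_trans hjT hz1)) hz0⟩
    · exact absurd (hz q hTq) (by omega)
  -- main: two 2s in a' have a zero between
  intro p q hpq hp2 hq2
  by_cases hpT : p = T
  · subst hpT
    obtain ⟨z, hz1, hz2, hz0⟩ := haux_r q hpq hq2
    exact ⟨z, hz1, hz2, hz0⟩
  by_cases hqT : q = T
  · subst hqT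
    obtain ⟨z, hz1, hz2, hz0⟩ := haux_l p hpq hp2
    exact ⟨z, hz1, hz2, hz0⟩
  have hap : a p = 2 := h2 p hpT hp2
  have haq : a q = 2 := h2 q hqT hq2
  obtain ⟨z0, hz01, hz02, hz00⟩ := hinv p q hpq hap haq
  by_cases hz0T : z0 = T
  · subst hz0T
    obtain ⟨z, hz1, hz2, hz0'⟩ := haux_l p hz01 hp2
    exact ⟨z, hz1, lt_trans hz2 hz02, hz0'⟩
  · exact ⟨z0, hz01, hz02, hzero z0 hz0T hz00⟩

lemma reach_inv {n : ℕ} {a : Fin n → ℕ}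
    (h : Reach (fun _ => 0) a) : StateInv a := by
  induction h with
  | refl =>
    exact ⟨fun _ => by norm_num, fun p q _ hp _ => by simp at hp⟩
  | tail _ hstep ih =>
    obtain ⟨T, hm⟩ := hstep
    exact move_inv ih hm

theorem final_state_form {n : ℕ} (hn : 1 ≤ n) (a : Fin n → ℕ)
    (h : Reach (fun _ => 0) a) (hfinal : ∀ i, a i ≠ 0) :
    ∃ k : Fin n, a k = 2 ∧ ∀ i : Fin n, i ≠ k → a i = 1 := by
  have hInv : StateInv a := reach_inv h
  rcases Relation.ReflTransGen.cases_tail h with heq | ⟨b, _, hstep⟩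
  · exact absurd (congrFun heq ⟨0, hn⟩) (hfinal ⟨0, hn⟩)
  · obtain ⟨T, hm⟩ := hstep
    refine ⟨T, hm.2.1, ?_⟩
    intro i hi
    have hle := hInv.1 i
    have hne := hfinal i
    by_contra hone
    have hi2 : a i = 2 := by omega
    rcases hi.lt_or_gt with hlt | hgt
    · obtain ⟨z, _, _, hz0⟩ := hInv.2 i T hlt hi2 hm.2.1
      exact hfinal z hz0
    · obtain ⟨z, _, _, hz0⟩ := hInv.2 T i hgt hm.2.1 hi2
      exact hfinal z hz0
end

section
/- If a state (a_0, ..., a_{N-2}) is reachable from 0^(N-2) by a sequence of moves, then for any insertion position i ∈ {0, ..., N-1}, the state (a_0, ..., a_{i-1}, 0, a_i, ..., a_{N-2}) obtained by inserting a zero at position i is reachable from 0^(N-1) by a sequence of moves. -/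
/-- The state obtained by inserting a zero at position `i`. -/
def insertZero {n : ℕ} (a : Fin n → ℕ) (i : Fin (n + 1)) : Fin (n + 1) → ℕ :=
  fun j =>
    if h : (j : ℕ) < (i : ℕ) then a ⟨(j : ℕ), by omega⟩
    else if h' : (j : ℕ) = (i : ℕ) then 0
    else a ⟨(j : ℕ) - 1, by omega⟩

lemma insertZero_succAbove {n} (a : Fin n → ℕ) (i : Fin (n+1)) (j : Fin n) :
    insertZero a i (i.succAbove j) = a j := by
  unfold insertZero
  rcases lt_or_ge (j.castSucc) i with h | h
  · rw [Fin.succAbove_of_castSucc_lt _ _ h]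
    have : (j.castSucc : ℕ) < (i:ℕ) := h
    simp only [Fin.coe_castSucc] at this ⊢
    rw [dif_pos this]
  · rw [Fin.succAbove_of_le_castSucc _ _ h]
    have h1 : (i:ℕ) ≤ (j:ℕ) := h
    have : ¬ ((j.succ : ℕ) < (i:ℕ)) := by simp [Fin.val_succ]; omega
    rw [dif_neg this, dif_neg (by simp [Fin.val_succ]; omega)]
    congr 1

lemma insertZero_self {n} (a : Fin n → ℕ) (i : Fin (n+1)) : insertZero a i i = 0 := by
  simp [insertZero]

lemma move_insert {n} {a a' : Fin n → ℕ} {T : Fin n} (i : Fin (n+1)) (hm : Move a a' T) :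
    Move (insertZero a i) (insertZero a' i) (i.succAbove T) := by
  obtain ⟨h0, h2, hL, hR⟩ := hm
  refine ⟨by rw [insertZero_succAbove]; exact h0, by rw [insertZero_succAbove]; exact h2, ?_, ?_⟩
  · rcases hL with ⟨j, hjT, hpos, hdec, hzero, hunch⟩ | ⟨hz, hu⟩
    · left
      refine ⟨i.succAbove j, Fin.succAbove_lt_succAbove_iff.mpr hjT,
        by rw [insertZero_succAbove]; exact hpos,
        by rw [insertZero_succAbove, insertZero_succAbove]; exact hdec, ?_, ?_⟩
      · intro k hk1 hk2
        by_cases hki : k = i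
        · rw [hki]; exact insertZero_self _ i
        · obtain ⟨k', rfl⟩ := Fin.exists_succAbove_eq hki
          rw [insertZero_succAbove]
          exact hzero k' (Fin.succAbove_lt_succAbove_iff.mp hk1)
            (Fin.succAbove_lt_succAbove_iff.mp hk2)
      · intro k hk hkj
        by_cases hki : k = i
        · rw [hki, insertZero_self, insertZero_self]
        · obtain ⟨k', rfl⟩ := Fin.exists_succAbove_eq hki
          rw [insertZero_succAbove, insertZero_succAbove]
          exact hunch k' (Fin.succAbove_lt_succAbove_iff.mp hk)
            (fun h => hkj (by rw [h]))
    · right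
      constructor <;> intro k hk
      · by_cases hki : k = i
        · rw [hki]; exact insertZero_self _ i
        · obtain ⟨k', rfl⟩ := Fin.exists_succAbove_eq hki
          rw [insertZero_succAbove]
          exact hz k' (Fin.succAbove_lt_succAbove_iff.mp hk)
      · by_cases hki : k = i
        · rw [hki, insertZero_self, insertZero_self]
        · obtain ⟨k', rfl⟩ := Fin.exists_succAbove_eq hki
          rw [insertZero_succAbove, insertZero_succAbove]
          exact hu k' (Fin.succAbove_lt_succAbove_iff.mp hk)
  · rcases hR with ⟨j, hjT, hpos, hdec, hzero, hunch⟩ | ⟨hz, hu⟩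
    · left
      refine ⟨i.succAbove j, Fin.succAbove_lt_succAbove_iff.mpr hjT,
        by rw [insertZero_succAbove]; exact hpos,
        by rw [insertZero_succAbove, insertZero_succAbove]; exact hdec, ?_, ?_⟩
      · intro k hk1 hk2
        by_cases hki : k = i
        · rw [hki]; exact insertZero_self _ i
        · obtain ⟨k', rfl⟩ := Fin.exists_succAbove_eq hki
          rw [insertZero_succAbove]
          exact hzero k' (Fin.succAbove_lt_succAbove_iff.mp hk1)
            (Fin.succAbove_lt_succAbove_iff.mp hk2)
      · intro k hk hkj
        by_cases hki : k = i
        · rw [hki, insertZero_self, insertZero_self]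
        · obtain ⟨k', rfl⟩ := Fin.exists_succAbove_eq hki
          rw [insertZero_succAbove, insertZero_succAbove]
          exact hunch k' (Fin.succAbove_lt_succAbove_iff.mp hk)
            (fun h => hkj (by rw [h]))
    · right
      constructor <;> intro k hk
      · by_cases hki : k = i
        · rw [hki]; exact insertZero_self _ i
        · obtain ⟨k', rfl⟩ := Fin.exists_succAbove_eq hki
          rw [insertZero_succAbove]
          exact hz k' (Fin.succAbove_lt_succAbove_iff.mp hk)
      · by_cases hki : k = i
        · rw [hki, insertZero_self, insertZero_self]
        · obtain ⟨k', rfl⟩ := Fin.exists_succAbove_eq hki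
          rw [insertZero_succAbove, insertZero_succAbove]
          exact hu k' (Fin.succAbove_lt_succAbove_iff.mp hk)

lemma insertZero_zero {n} (i : Fin (n+1)) :
    insertZero (fun _ : Fin n => 0) i = fun _ => 0 := by
  funext j; unfold insertZero
  split <;> [rfl; (split <;> rfl)]

theorem insert_zero_reachable {n : ℕ} (a : Fin n → ℕ)
    (h : Reach (fun _ => 0) a) (i : Fin (n + 1)) :
    Reach (fun _ => 0) (insertZero a i) := by
  have key : Relation.ReflTransGen (Step (n := n+1))
      (insertZero (fun _ => 0) i) (insertZero a i) := by
    refine Relation.ReflTransGen.lift (fun b => insertZero b i) ?_ _ _ h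
    rintro x y ⟨T, hm⟩
    exact ⟨i.succAbove T, move_insert i hm⟩
  rwa [insertZero_zero] at key
end

section
/- For every N ≥ 2 and every k ∈ {0, ..., N-2}, the state 1^k 2 1^(N-2-k) is reachable from the all-zero state 0^(N-1) by a finite sequence of moves. Hence every state with exactly one entry equal to 2 and all other entries equal to 1 is a possible final state. -/
/-- state during block 0, after move at `T`. -/
def stC (n T m : ℕ) : Fin n → ℕ := fun j =>
  if j.val < T then 0 else if j.val = T then 2 else if j.val ≤ m then 1 else 0

/-- state after block `i` finished. -/
def stA (n i m : ℕ) : Fin n → ℕ := fun j =>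
  if j.val = i then 2 else if j.val ≤ i + m then 1 else 0

/-- state during block `i+1`, after move at `T`, `i+2 ≤ T ≤ i+1+m`. -/
def stB (n i T m : ℕ) : Fin n → ℕ := fun j =>
  if j.val = T then 2 else if j.val = i then 2
  else if j.val + 1 = T then 0 else if j.val ≤ i + 1 + m then 1 else 0

lemma L1 {n m : ℕ} (hm : m < n) : Step (fun _ : Fin n => 0) (stC n m m) := by
  refine ⟨⟨m, hm⟩, rfl, ?_, ?_, ?_⟩
  · simp [stC]
  · right
    refine ⟨fun j _ => rfl, fun j hj => ?_⟩
    simp only [Fin.lt_def, Fin.val_mk] at hj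
    simp only [stC, Fin.val_mk]
    split_ifs <;> omega
  · right
    refine ⟨fun j _ => rfl, fun j hj => ?_⟩
    simp only [Fin.lt_def, Fin.val_mk] at hj
    simp only [stC, Fin.val_mk]
    split_ifs <;> omega

lemma L2 {n T m : ℕ} (hT : T < m) (hm : m < n) :
    Step (stC n (T + 1) m) (stC n T m) := by
  refine ⟨⟨T, by omega⟩, ?_, ?_, ?_, ?_⟩
  · simp [stC]
  · simp [stC]
  · right
    constructor <;>
    · intro j hj
      simp only [Fin.lt_def, Fin.val_mk] at hj
      simp only [stC, Fin.val_mk]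
      split_ifs <;> omega
  · left
    refine ⟨⟨T + 1, by omega⟩, by simp [Fin.lt_def], by simp [stC], ?_, ?_, ?_⟩
    · simp only [stC, Fin.val_mk]; split_ifs <;> omega
    · intro c h1 h2
      simp only [Fin.lt_def, Fin.val_mk] at h1 h2
      omega
    · intro c h1 h2
      simp only [Fin.lt_def, Fin.val_mk] at h1
      simp only [ne_eq, Fin.ext_iff, Fin.val_mk] at h2
      simp only [stC, Fin.val_mk]
      split_ifs <;> omega

lemma L3 {n i : ℕ} (hi : i + 1 < n) : Step (stA n i 0) (stA n (i + 1) 0) := by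
  refine ⟨⟨i + 1, hi⟩, ?_, ?_, ?_, ?_⟩
  · simp only [stA, Fin.val_mk]; split_ifs <;> omega
  · simp [stA]
  · left
    refine ⟨⟨i, by omega⟩, by simp [Fin.lt_def], ?_, ?_, ?_, ?_⟩
    · simp [stA]
    · simp only [stA, Fin.val_mk]; split_ifs <;> omega
    · intro c h1 h2
      simp only [Fin.lt_def, Fin.val_mk] at h1 h2
      omega
    · intro c h1 h2
      simp only [Fin.lt_def, Fin.val_mk] at h1
      simp only [ne_eq, Fin.ext_iff, Fin.val_mk] at h2
      simp only [stA, Fin.val_mk]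
      split_ifs <;> omega
  · right
    constructor <;>
    · intro j hj
      simp only [Fin.lt_def, Fin.val_mk] at hj
      simp only [stA, Fin.val_mk]
      split_ifs <;> omega

lemma L4 {n i m : ℕ} (hm : 1 ≤ m) (h : i + 1 + m < n) :
    Step (stA n i m) (stB n i (i + 1 + m) m) := by
  refine ⟨⟨i + 1 + m, h⟩, ?_, ?_, ?_, ?_⟩
  · simp only [stA, Fin.val_mk]; split_ifs <;> omega
  · simp [stB]
  · left
    refine ⟨⟨i + m, by omega⟩, by simp [Fin.lt_def], ?_, ?_, ?_, ?_⟩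
    · simp only [stA, Fin.val_mk]; split_ifs <;> omega
    · simp only [stA, stB, Fin.val_mk]; split_ifs <;> omega
    · intro c h1 h2
      simp only [Fin.lt_def, Fin.val_mk] at h1 h2
      omega
    · intro c h1 h2
      simp only [Fin.lt_def, Fin.val_mk] at h1
      simp only [ne_eq, Fin.ext_iff, Fin.val_mk] at h2
      simp only [stA, stB, Fin.val_mk]
      split_ifs <;> omega
  · right
    constructor <;>
    · intro j hj
      simp only [Fin.lt_def, Fin.val_mk] at hj
      simp only [stA, stB, Fin.val_mk]
      split_ifs <;> omega

lemma L5 {n i T m : ℕ} (h1 : i + 2 ≤ T) (h2 : T < i + 1 + m) (h : i + 1 + m < n) :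
    Step (stB n i (T + 1) m) (stB n i T m) := by
  refine ⟨⟨T, by omega⟩, ?_, ?_, ?_, ?_⟩
  · simp only [stB, Fin.val_mk]; split_ifs <;> omega
  · simp only [stB, Fin.val_mk]; split_ifs <;> omega
  · left
    refine ⟨⟨T - 1, by omega⟩, by simp [Fin.lt_def]; omega, ?_, ?_, ?_, ?_⟩
    · simp only [stB, Fin.val_mk]; split_ifs <;> omega
    · simp only [stB, Fin.val_mk]; split_ifs <;> omega
    · intro c hc1 hc2
      simp only [Fin.lt_def, Fin.val_mk] at hc1 hc2
      omega
    · intro c hc1 hc2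
      simp only [Fin.lt_def, Fin.val_mk] at hc1
      simp only [ne_eq, Fin.ext_iff, Fin.val_mk] at hc2
      simp only [stB, Fin.val_mk]
      split_ifs <;> omega
  · left
    refine ⟨⟨T + 1, by omega⟩, by simp [Fin.lt_def], ?_, ?_, ?_, ?_⟩
    · simp only [stB, Fin.val_mk]; split_ifs <;> omega
    · simp only [stB, Fin.val_mk]; split_ifs <;> omega
    · intro c hc1 hc2
      simp only [Fin.lt_def, Fin.val_mk] at hc1 hc2
      omega
    · intro c hc1 hc2
      simp only [Fin.lt_def, Fin.val_mk] at hc1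
      simp only [ne_eq, Fin.ext_iff, Fin.val_mk] at hc2
      simp only [stB, Fin.val_mk]
      split_ifs <;> omega

lemma L6 {n i m : ℕ} (hm : 1 ≤ m) (h : i + 1 + m < n) :
    Step (stB n i (i + 2) m) (stA n (i + 1) m) := by
  refine ⟨⟨i + 1, by omega⟩, ?_, ?_, ?_, ?_⟩
  · simp only [stB, Fin.val_mk]; split_ifs <;> omega
  · simp only [stA, Fin.val_mk]; split_ifs <;> omega
  · left
    refine ⟨⟨i, by omega⟩, by simp [Fin.lt_def], ?_, ?_, ?_, ?_⟩
    · simp only [stB, Fin.val_mk]; split_ifs <;> omega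
    · simp only [stB, stA, Fin.val_mk]; split_ifs <;> omega
    · intro c hc1 hc2
      simp only [Fin.lt_def, Fin.val_mk] at hc1 hc2
      omega
    · intro c hc1 hc2
      simp only [Fin.lt_def, Fin.val_mk] at hc1
      simp only [ne_eq, Fin.ext_iff, Fin.val_mk] at hc2
      simp only [stB, stA, Fin.val_mk]
      split_ifs <;> omega
  · left
    refine ⟨⟨i + 2, by omega⟩, by simp [Fin.lt_def], ?_, ?_, ?_, ?_⟩
    · simp only [stB, Fin.val_mk]; split_ifs <;> omega
    · simp only [stB, stA, Fin.val_mk]; split_ifs <;> omega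
    · intro c hc1 hc2
      simp only [Fin.lt_def, Fin.val_mk] at hc1 hc2
      omega
    · intro c hc1 hc2
      simp only [Fin.lt_def, Fin.val_mk] at hc1
      simp only [ne_eq, Fin.ext_iff, Fin.val_mk] at hc2
      simp only [stB, stA, Fin.val_mk]
      split_ifs <;> omega

lemma reachC {n m : ℕ} (hm : m < n) :
    ∀ d, d ≤ m → Reach (fun _ : Fin n => 0) (stC n (m - d) m) := by
  intro d
  induction d with
  | zero => intro _; exact Relation.ReflTransGen.single (by simpa using L1 hm)
  | succ d ih =>
    intro hd
    have h1 : Reach (fun _ : Fin n => 0) (stC n (m - d) m) := ih (by omega)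
    have h2 : Step (stC n ((m - (d+1)) + 1) m) (stC n (m - (d+1)) m) := L2 (by omega) hm
    have : m - (d+1) + 1 = m - d := by omega
    rw [this] at h2
    exact Relation.ReflTransGen.tail h1 h2

lemma reachBdown {n i m : ℕ} (hm : 1 ≤ m) (h : i + 1 + m < n)
    (base : Reach (fun _ : Fin n => 0) (stA n i m)) :
    ∀ d, d ≤ m - 1 → Reach (fun _ : Fin n => 0) (stB n i (i + 1 + m - d) m) := by
  intro d
  induction d with
  | zero => intro _; exact Relation.ReflTransGen.tail base (by simpa using L4 hm h)
  | succ d ih =>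
    intro hd
    have h1 := ih (by omega)
    have h2 : Step (stB n i ((i + 1 + m - (d+1)) + 1) m) (stB n i (i + 1 + m - (d+1)) m) :=
      L5 (by omega) (by omega) h
    have : i + 1 + m - (d+1) + 1 = i + 1 + m - d := by omega
    rw [this] at h2
    exact Relation.ReflTransGen.tail h1 h2

lemma reachA {n m : ℕ} (hm : m < n) :
    ∀ i, i + m < n → Reach (fun _ : Fin n => 0) (stA n i m) := by
  intro i
  induction i with
  | zero =>
    intro _
    have := reachC hm m le_rfl
    have he : stC n (m - m) m = stA n 0 m := by
      funext j
      simp only [stC, stA, Fin.val_mk]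
      split_ifs <;> omega
    rwa [he] at this
  | succ i ih =>
    intro hik
    have base := ih (by omega)
    rcases Nat.eq_zero_or_pos m with h0 | h1
    · subst h0
      exact Relation.ReflTransGen.tail base (L3 (by omega))
    · have hb := reachBdown h1 (by omega) base (m - 1) le_rfl
      have : i + 1 + m - (m - 1) = i + 2 := by omega
      rw [this] at hb
      exact Relation.ReflTransGen.tail hb (L6 h1 (by omega))

theorem all_final_states_reachable {n : ℕ} (hn : 1 ≤ n) (k : Fin n) :
    Reach (fun _ => 0) (fun i : Fin n => if i = k then 2 else 1) := by
  have hk := k.isLt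
  have h := reachA (n := n) (m := n - 1 - k.val) (by omega) k.val (by omega)
  have he : stA n k.val (n - 1 - k.val) = (fun i : Fin n => if i = k then 2 else 1) := by
    funext j
    have hj := j.isLt
    simp only [stA, Fin.ext_iff]
    split_ifs <;> omega
  rwa [he] at h
end

section
/- In any sequence of moves a^1, ..., a^n with a^1 = a^n and n > 1 (a hypothetical cycle), consider the smallest index i such that the entry at position i changes during the cycle. Then at the step t where position i first changes, either all entries left of i in a^t are zero, or some entry left of i changes at step t. (This dichotomy yields a contradiction, proving cycles are impossible.) -/
theorem cycle_dichotomy {n : ℕ} (m : ℕ) (s : ℕ → Fin n → ℕ) (hm : 1 < m)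
    (hmove : ∀ t, t < m - 1 → Step (s t) (s (t + 1))) (hcyc : s (m - 1) = s 0)
    (i : Fin n)
    (hchanges : ∃ t, t < m - 1 ∧ s t i ≠ s (t + 1) i)
    (hmin : ∀ j : Fin n, j < i → ∀ t, t < m - 1 → s t j = s (t + 1) j)
    (t : ℕ) (ht : t < m - 1) (hchange : s t i ≠ s (t + 1) i)
    (hfirst : ∀ t', t' < t → s t' i = s (t' + 1) i) :
    (∀ j : Fin n, j < i → s t j = 0) ∨
    (∃ j : Fin n, j < i ∧ s t j ≠ s (t + 1) j) := by
  obtain ⟨T, hT0, hT2, hl, hr⟩ := hmove t ht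
  -- constancy of entries left of i throughout the cycle
  have hconst : ∀ j : Fin n, j < i → ∀ u, u ≤ m - 1 → s u j = s 0 j := by
    intro j hj u hu
    induction u with
    | zero => rfl
    | succ u ih => rw [← hmin j hj u (by omega), ih (by omega)]
  rcases lt_trichotomy i T with hiT | hiT | hiT
  · -- i < T : i must be the decreased left neighbor
    rcases hl with ⟨j, hjT, hjpos, hj', hzero, hother⟩ | ⟨hz, hid⟩
    · by_cases hij : i = j
      · subst hij
        -- hard case: show all entries left of i at time t are zero
        left
        by_contra hcon
        push_neg at hcon
        obtain ⟨j0, hj0i, hj0pos⟩ := hcon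
        -- i never increases over the whole cycle
        have hkey : ∀ u, u < m - 1 → s (u + 1) i ≤ s u i := by
          intro u hu
          obtain ⟨U, h0, h2, hl', hr'⟩ := hmove u hu
          rcases lt_trichotomy i U with h | h | h
          · rcases hl' with ⟨k, hkU, hkpos, hk', _, hoth⟩ | ⟨_, hid'⟩
            · by_cases hik : i = k
              · subst hik; omega
              · rw [hoth i h hik]
            · rw [hid' i h]
          · -- i = U : impossible since j0 < i stays positive
            subst h
            rcases hl' with ⟨k, hki, hkpos, hk', _, _⟩ | ⟨hz', _⟩
            · have := hmin k hki u hu; omega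
            · have h1 := hconst j0 hj0i u (by omega)
              have h2 := hconst j0 hj0i t (by omega)
              have := hz' j0 hj0i
              omega
          · rcases hr' with ⟨k, hUk, hkpos, hk', _, hoth⟩ | ⟨_, hid'⟩
            · by_cases hik : i = k
              · subst hik; omega
              · rw [hoth i h hik]
            · rw [hid' i h]
        have hstrict : s (t + 1) i < s t i := by omega
        have heq0 : ∀ u, u ≤ t → s u i = s 0 i := by
          intro u hu
          induction u with
          | zero => rfl
          | succ u ih => rw [← hfirst u (by omega), ih (by omega)]
        have hall : ∀ u, u ≤ m - 1 → t + 1 ≤ u → s u i ≤ s (t + 1) i := by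
          intro u
          induction u with
          | zero => intro _ h; omega
          | succ u ih =>
            intro h1 h2
            by_cases hc : t + 1 ≤ u
            · exact (hkey u (by omega)).trans (ih (by omega) hc)
            · have hu : u = t := by omega
              subst hu
              exact le_refl _
        have hend : s (m - 1) i ≤ s (t + 1) i := hall (m - 1) (le_refl _) (by omega)
        have h0 : s t i = s 0 i := heq0 t (le_refl _)
        have hc : s (m - 1) i = s 0 i := by rw [hcyc]
        omega
      · exact absurd (hother i hiT hij) (Ne.symm hchange)
    · exact absurd (hid i hiT) (Ne.symm hchange)
  · -- i = T : either all left entries are zero, or some left entry decreases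
    subst hiT
    rcases hl with ⟨j, hjT, hjpos, hj', _, _⟩ | ⟨hz, _⟩
    · exact Or.inr ⟨j, hjT, by omega⟩
    · exact Or.inl hz
  · -- T < i : T itself changes (0 → 2)
    exact Or.inr ⟨T, hiT, by omega⟩
end
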